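/- Let w₀, g₀, g₁, g₂, … be a mutually (jointly) independent sequence of square-integrable random vectors on a probability space (Ω, 𝒜, P) taking values in EuclideanSpace ℝ (Fin n), with E[w₀] = 0, E[g_k] = 0 and Var(g_k) = V for every k, and let s : ℕ → ℝ have square-summable entries with ∑_{k=0}^∞ s_k² = S. Then for every fixed w* in EuclideanSpace ℝ (Fin n), the SGD iterates w_t := w₀ − ∑_{k<t} s_k • g_k satisfy E[‖w_t − w*‖²] = Var(w₀) + (∑_{k<t} s_k²)·V + ‖w*‖² for every t, and consequently E[‖w_t − w*‖²] → Var(w₀) + S·V + ‖w*‖² as t → ∞. -/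

import Mathlib

open MeasureTheory ProbabilityTheory Filter

noncomputable def Var {Ω E : Type*} [MeasurableSpace Ω] [NormedAddCommGroup E]
    [NormedSpace ℝ E] (P : MeasureTheory.Measure Ω) (X : Ω → E) : ℝ :=
  ∫ ω, ‖X ω - ∫ ω', X ω' ∂P‖ ^ 2 ∂P

open Finset
open scoped InnerProductSpace

/-! Writing `w_t = w₀ - ∑_{k<t} s_k g_k` as a sum of the independent increments `w₀, -s₀ g₀, …`,
the iterate `w_t` is independent of `g_t`. For independent square-integrable `X, Y` one has
`E⟪X, Y⟫ = ⟪E X, E Y⟫`, so `E ‖w_{t+1}‖² = E ‖w_t‖² + s_t² E ‖g_t‖²` because `E g_t = 0`.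
Since moreover `E w_t = 0`, the constant `w*` adds `‖w*‖²` without cross term, and the limit
comes from `∑_{k<t} s_k² → S`. -/

section

variable {Ω E : Type*} {mΩ : MeasurableSpace Ω} {μ : Measure Ω} [NormedAddCommGroup E]
  {w₀ : Ω → E} {g : ℕ → Ω → E} {s : ℕ → ℝ}

section NormedSpace

variable [NormedSpace ℝ E]

lemma var_eq_integral_norm_sq {X : Ω → E} (hX : ∫ ω, X ω ∂μ = 0) :
    Var μ X = ∫ ω, ‖X ω‖ ^ 2 ∂μ := by
  simp [Var, hX]

def sgdIterate (w₀ : Ω → E) (g : ℕ → Ω → E) (s : ℕ → ℝ) (t : ℕ) (ω : Ω) : E :=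
  w₀ ω - ∑ k ∈ range t, s k • g k ω

lemma sgdIterate_succ (t : ℕ) (ω : Ω) :
    sgdIterate w₀ g s (t + 1) ω = sgdIterate w₀ g s t ω - s t • g t ω := by
  simp only [sgdIterate, sum_range_succ, sub_add_eq_sub_sub]

lemma memLp_sgdIterate (hw₀ : MemLp w₀ 2 μ) (hg : ∀ k, MemLp (g k) 2 μ) (t : ℕ) :
    MemLp (sgdIterate w₀ g s t) 2 μ :=
  hw₀.sub (memLp_finsetSum _ fun k _ => (hg k).const_smul (s k))

lemma integral_sgdIterate (hw₀ : Integrable w₀ μ) (hg : ∀ k, Integrable (g k) μ) (t : ℕ) :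
    ∫ ω, sgdIterate w₀ g s t ω ∂μ = ∫ ω, w₀ ω ∂μ - ∑ k ∈ range t, s k • ∫ ω, g k ω ∂μ := by
  have hsg : ∀ k ∈ range t, Integrable (fun ω => s k • g k ω) μ := fun k _ => (hg k).smul (s k)
  simp only [sgdIterate]
  rw [integral_sub hw₀ (integrable_finsetSum _ hsg), integral_finsetSum _ hsg]
  simp only [integral_smul]

lemma indepFun_sgdIterate_smul [MeasurableSpace E] [BorelSpace E] [SecondCountableTopology E]
    (hindep : iIndepFun (fun o : Option ℕ => Option.elim o w₀ g) μ)
    (hw₀ : AEMeasurable w₀ μ) (hg : ∀ k, AEMeasurable (g k) μ) (t : ℕ) :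
    IndepFun (sgdIterate w₀ g s t) (fun ω => s t • g t ω) μ := by
  let φ : Option ℕ → E → E := fun o => Option.elim o id fun k x => -(s k • x)
  have hφ : ∀ o, Measurable (φ o) := by rintro (_ | k) <;> simp [φ] <;> fun_prop
  let F : Option ℕ → Ω → E := fun o => φ o ∘ Option.elim o w₀ g
  have hF : ∀ o, AEMeasurable (F o) μ := by
    rintro (_ | k)
    · exact (hφ none).comp_aemeasurable hw₀
    · exact (hφ (some k)).comp_aemeasurable (hg k)
  have h := ((hindep.comp φ hφ).indepFun_finsetSum_of_notMem₀ hF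
    (s := insert none ((range t).image some)) (i := some t) (by simp)).comp
    measurable_id measurable_neg
  convert h using 1 <;> ext ω
  · simp [sgdIterate, φ, sum_insert, sum_image, sub_eq_add_neg]
  · simp [φ]

end NormedSpace

section InnerProductSpace

variable [InnerProductSpace ℝ E] [CompleteSpace E] [MeasurableSpace E] [BorelSpace E]

namespace ProbabilityTheory

lemma IndepFun.integral_inner {X Y : Ω → E} (hXY : IndepFun X Y μ) (hX : Integrable X μ)
    (hY : Integrable Y μ) :
    ∫ ω, ⟪X ω, Y ω⟫_ℝ ∂μ = ⟪∫ ω, X ω ∂μ, ∫ ω, Y ω ∂μ⟫_ℝ :=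
  hXY.integral_bilin hX hY (innerSL ℝ)

lemma IndepFun.integral_norm_sub_sq [IsFiniteMeasure μ] {X Y : Ω → E} (hXY : IndepFun X Y μ)
    (hX : MemLp X 2 μ) (hY : MemLp Y 2 μ) :
    ∫ ω, ‖X ω - Y ω‖ ^ 2 ∂μ =
      ∫ ω, ‖X ω‖ ^ 2 ∂μ - 2 * ⟪∫ ω, X ω ∂μ, ∫ ω, Y ω ∂μ⟫_ℝ + ∫ ω, ‖Y ω‖ ^ 2 ∂μ := by
  have hX1 := hX.integrable one_le_two
  have hY1 := hY.integrable one_le_two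
  have hX2 := (memLp_two_iff_integrable_sq_norm hX.1).1 hX
  have hY2 := (memLp_two_iff_integrable_sq_norm hY.1).1 hY
  have hXY1 : Integrable (fun ω => 2 * ⟪X ω, Y ω⟫_ℝ) μ :=
    (hXY.integrable_bilin hX1 hY1 (innerSL ℝ)).const_mul 2
  simp_rw [norm_sub_sq_real]
  rw [integral_add (f := fun ω => ‖X ω‖ ^ 2 - 2 * ⟪X ω, Y ω⟫_ℝ) (hX2.sub hXY1) hY2,
    integral_sub hX2 hXY1, integral_const_mul, hXY.integral_inner hX1 hY1]

end ProbabilityTheory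

lemma integral_norm_sq_sgdIterate [SecondCountableTopology E] [IsProbabilityMeasure μ]
    (hindep : iIndepFun (fun o : Option ℕ => Option.elim o w₀ g) μ)
    (hw₀ : MemLp w₀ 2 μ) (hg : ∀ k, MemLp (g k) 2 μ) (hEg : ∀ k, ∫ ω, g k ω ∂μ = 0) (t : ℕ) :
    ∫ ω, ‖sgdIterate w₀ g s t ω‖ ^ 2 ∂μ =
      ∫ ω, ‖w₀ ω‖ ^ 2 ∂μ + ∑ k ∈ range t, s k ^ 2 * ∫ ω, ‖g k ω‖ ^ 2 ∂μ := by
  induction t with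
  | zero => simp [sgdIterate]
  | succ t ih =>
    have hstep := (indepFun_sgdIterate_smul hindep hw₀.aemeasurable
      (fun k => (hg k).aemeasurable) t).integral_norm_sub_sq (memLp_sgdIterate hw₀ hg t)
      ((hg t).const_smul (s t))
    simp only [sgdIterate_succ, hstep, ih, integral_smul, hEg, smul_zero, inner_zero_right,
      norm_smul, mul_pow, Real.norm_eq_abs, sq_abs, integral_const_mul, sum_range_succ]
    ring

end InnerProductSpace

end

/-- **Expected squared distance of SGD iterates to a fixed target.** Let
`w₀, g₀, g₁, …` be a mutually (jointly) independent sequence of square-integrable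
random vectors with values in `EuclideanSpace ℝ (Fin n)` on a probability space
`(Ω, 𝒜, P)`, with `E[w₀] = 0`, `E[g_k] = 0` and `Var(g_k) = V` for every `k`, and let
`s : ℕ → ℝ` have square-summable entries with `∑_k s_k² = S`. Then for every fixed
`w*`, the SGD iterates `w_t := w₀ − ∑_{k<t} s_k • g_k` satisfy
`E[‖w_t − w*‖²] = Var(w₀) + (∑_{k<t} s_k²)·V + ‖w*‖²` for every `t`, and consequently
`E[‖w_t − w*‖²] → Var(w₀) + S·V + ‖w*‖²` as `t → ∞`. -/
theorem stmt7 {Ω : Type*} [MeasurableSpace Ω] (P : Measure Ω) [IsProbabilityMeasure P]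
    {n : ℕ} (w₀ : Ω → EuclideanSpace ℝ (Fin n))
    (g : ℕ → Ω → EuclideanSpace ℝ (Fin n)) (s : ℕ → ℝ) (V S : ℝ)
    (wstar : EuclideanSpace ℝ (Fin n))
    (hw₀ : MemLp w₀ 2 P) (hg : ∀ k, MemLp (g k) 2 P)
    (hindep : iIndepFun
      (fun o : Option ℕ => Option.elim o w₀ g) P)
    (hEw₀ : ∫ ω, w₀ ω ∂P = 0) (hEg : ∀ k, ∫ ω, g k ω ∂P = 0)
    (hV : ∀ k, Var P (g k) = V)
    (hsum : Summable (fun k => (s k) ^ 2)) (hS : ∑' k, (s k) ^ 2 = S) :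
    (∀ t, (∫ ω, ‖(w₀ ω - ∑ k ∈ Finset.range t, s k • g k ω) - wstar‖ ^ 2 ∂P)
        = Var P w₀ + (∑ k ∈ Finset.range t, (s k) ^ 2) * V + ‖wstar‖ ^ 2) ∧
      Tendsto
        (fun t => ∫ ω, ‖(w₀ ω - ∑ k ∈ Finset.range t, s k • g k ω) - wstar‖ ^ 2 ∂P)
        atTop (nhds (Var P w₀ + S * V + ‖wstar‖ ^ 2)) := by
  have hgV : ∀ k, ∫ ω, ‖g k ω‖ ^ 2 ∂P = V := fun k => by
    rw [← hV k, var_eq_integral_norm_sq (hEg k)]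
  have hdist : ∀ t, (∫ ω, ‖(w₀ ω - ∑ k ∈ Finset.range t, s k • g k ω) - wstar‖ ^ 2 ∂P)
      = Var P w₀ + (∑ k ∈ Finset.range t, (s k) ^ 2) * V + ‖wstar‖ ^ 2 := by
    intro t
    have hmean : ∫ ω, sgdIterate w₀ g s t ω ∂P = 0 := by
      simp [integral_sgdIterate (hw₀.integrable one_le_two) (fun k => (hg k).integrable one_le_two),
        hEw₀, hEg]
    change ∫ ω, ‖sgdIterate w₀ g s t ω - wstar‖ ^ 2 ∂P = _
    rw [(indepFun_const_right _ wstar).integral_norm_sub_sq (memLp_sgdIterate hw₀ hg t)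
      (memLp_const wstar), hmean, integral_norm_sq_sgdIterate hindep hw₀ hg hEg t,
      var_eq_integral_norm_sq hEw₀]
    simp [hgV, sum_mul]
  refine ⟨hdist, ?_⟩
  simp only [hdist]
  rw [← hS]
  exact ((hsum.tendsto_sum_tsum_nat.mul_const V).const_add _).add_const _
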